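/- Let 𝒞 be a collection of cells over a field K and let 𝔭 be a minimal prime of the adjacent 2-minor ideal I_adj(𝒞). Then there exists an admissible set W of 𝒞 such that 𝔭 = P_W(𝒞) = (x_w : w ∈ W) + L_{𝒞_W}. -/

import Mathlib

open MvPolynomial

/-- The vertex set of the cell with lower-left corner `a`. -/
def cellVerts (a : ℤ × ℤ) : Finset (ℤ × ℤ) :=
  {a, a + (1, 0), a + (0, 1), a + (1, 1)}

/-- The edges of the cell with lower-left corner `a`, recorded as ordered pairs
of their two endpoints: `{a,c}`, `{c,b}`, `{b,d}`, `{a,d}` where `b = a+(1,1)`,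
`c = a+(0,1)`, `d = a+(1,0)`. -/
def cellEdges (a : ℤ × ℤ) : Finset ((ℤ × ℤ) × (ℤ × ℤ)) :=
  {(a, a + (0, 1)), (a + (0, 1), a + (1, 1)), (a + (1, 1), a + (1, 0)), (a, a + (1, 0))}

/-- The vertex set of a collection of cells; cells are recorded by their
lower-left corners. -/
def verts (C : Finset (ℤ × ℤ)) : Finset (ℤ × ℤ) :=
  C.biUnion cellVerts

lemma mem_verts {C : Finset (ℤ × ℤ)} {a v : ℤ × ℤ} (ha : a ∈ C)
    (hv : v ∈ cellVerts a) : v ∈ verts C :=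
  Finset.mem_biUnion.mpr ⟨a, ha, hv⟩

lemma corner_mem00 (a : ℤ × ℤ) : a ∈ cellVerts a := by simp [cellVerts]
lemma corner_mem10 (a : ℤ × ℤ) : a + (1, 0) ∈ cellVerts a := by simp [cellVerts]
lemma corner_mem01 (a : ℤ × ℤ) : a + (0, 1) ∈ cellVerts a := by simp [cellVerts]
lemma corner_mem11 (a : ℤ × ℤ) : a + (1, 1) ∈ cellVerts a := by simp [cellVerts]

/-- The adjacent 2-minor ideal `I_adj(𝒞)` of a collection of cells, inside the
polynomial ring `S_𝒞 = K[x_v : v ∈ V(𝒞)]`. -/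
noncomputable def adjIdeal (K : Type*) [Field K] (C : Finset (ℤ × ℤ)) :
    Ideal (MvPolynomial {v // v ∈ verts C} K) :=
  Ideal.span {f | ∃ a, ∃ ha : a ∈ C,
    f = X ⟨a, mem_verts ha (corner_mem00 a)⟩ *
          X ⟨a + (1, 1), mem_verts ha (corner_mem11 a)⟩ -
        X ⟨a + (0, 1), mem_verts ha (corner_mem01 a)⟩ *
          X ⟨a + (1, 0), mem_verts ha (corner_mem10 a)⟩}

/-- The vector `v_C = e_a + e_b - e_c - e_d ∈ ℤ^{V(𝒞)}` attached to the cell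
with lower-left corner `a` (so `b = a+(1,1)`, `c = a+(0,1)`, `d = a+(1,0)`). -/
def cellVec (C : Finset (ℤ × ℤ)) (a : ℤ × ℤ) : {v // v ∈ verts C} → ℤ :=
  fun w => ((if w.1 = a then 1 else 0) + (if w.1 = a + (1, 1) then 1 else 0)
    - (if w.1 = a + (0, 1) then 1 else 0)) - (if w.1 = a + (1, 0) then 1 else 0)

/-- The lattice `Λ_𝒟 ⊆ ℤ^{V(𝒞)}` generated by the vectors `v_C`, `C ∈ 𝒟`,
for a subcollection `𝒟` of `𝒞`. -/
def cellLattice (C : Finset (ℤ × ℤ)) (D : Set (ℤ × ℤ)) :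
    AddSubgroup ({v // v ∈ verts C} → ℤ) :=
  AddSubgroup.closure {g | ∃ a ∈ D, g = cellVec C a}

/-- The lattice ideal `L_𝒟 ⊆ S_𝒞` of a subcollection `𝒟` of `𝒞`. -/
noncomputable def latticeIdeal (K : Type*) [Field K] (C : Finset (ℤ × ℤ))
    (D : Set (ℤ × ℤ)) : Ideal (MvPolynomial {v // v ∈ verts C} K) :=
  Ideal.span {f | ∃ e ∈ cellLattice C D,
    f = (∏ w, X w ^ (e w).toNat) - ∏ w, X w ^ (-(e w)).toNat}

/-- `W ⊆ V(𝒞)` is admissible: for each cell `C ∈ 𝒞`, either `W ∩ C = ∅` or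
`W ∩ C` contains an edge of `C`. -/
def Admissible (C : Finset (ℤ × ℤ)) (W : Set (ℤ × ℤ)) : Prop :=
  W ⊆ ↑(verts C) ∧ ∀ a ∈ C, (∀ v ∈ cellVerts a, v ∉ W) ∨
    ∃ e ∈ cellEdges a, e.1 ∈ W ∧ e.2 ∈ W

/-- The subcollection `𝒞_W` of cells of `𝒞` disjoint from `W`. -/
def subcollW (C : Finset (ℤ × ℤ)) (W : Set (ℤ × ℤ)) : Set (ℤ × ℤ) :=
  {a | a ∈ C ∧ ∀ v ∈ cellVerts a, v ∉ W}

/-- The ideal `P_W(𝒞) = (x_w : w ∈ W) + L_{𝒞_W}`. -/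
noncomputable def PW (K : Type*) [Field K] (C : Finset (ℤ × ℤ))
    (W : Set (ℤ × ℤ)) : Ideal (MvPolynomial {v // v ∈ verts C} K) :=
  Ideal.span {f | ∃ v : {v // v ∈ verts C}, v.1 ∈ W ∧ f = X v} +
    latticeIdeal K C (subcollW C W)

/-- The height of an ideal: the infimum of `Order.height 𝔭` over the prime
ideals `𝔭` containing it (equivalently, over its minimal primes); for a prime
ideal this is just its height. -/
noncomputable def idealHeight {R : Type*} [CommRing R] (I : Ideal R) : ℕ∞ :=
  ⨅ p ∈ {p : PrimeSpectrum R | I ≤ p.asIdeal}, Order.height p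

/-- A collection of cells is weakly connected if any two of its cells are
joined by a sequence of cells of the collection in which consecutive cells
share at least one vertex. -/
def WeaklyConnected (C : Finset (ℤ × ℤ)) : Prop :=
  ∀ a ∈ C, ∀ b ∈ C, Relation.ReflTransGen
    (fun p q => p ∈ C ∧ q ∈ C ∧ ((cellVerts p ∩ cellVerts q).Nonempty)) a b

/-- `𝒞` contains a square tetromino. -/
def HasSquareTetromino (C : Finset (ℤ × ℤ)) : Prop :=
  ∃ a : ℤ × ℤ, a ∈ C ∧ a + (1, 0) ∈ C ∧ a + (0, 1) ∈ C ∧ a + (1, 1) ∈ C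

/-- `𝒞` contains an X-pentomino. -/
def HasXPentomino (C : Finset (ℤ × ℤ)) : Prop :=
  ∃ a : ℤ × ℤ, a ∈ C ∧ a + (1, 0) ∈ C ∧ a - (1, 0) ∈ C ∧
    a + (0, 1) ∈ C ∧ a - (0, 1) ∈ C

/-- Row convexity of a collection of cells. -/
def RowConvex (C : Finset (ℤ × ℤ)) : Prop :=
  ∀ a ∈ C, ∀ b ∈ C, a.2 = b.2 → ∀ r : ℤ, a.1 ≤ r → r ≤ b.1 → (r, a.2) ∈ C

/-- Column convexity of a collection of cells. -/
def ColConvex (C : Finset (ℤ × ℤ)) : Prop :=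
  ∀ a ∈ C, ∀ b ∈ C, a.1 = b.1 → ∀ s : ℤ, a.2 ≤ s → s ≤ b.2 → (a.1, s) ∈ C

/-!
Let `W` be the set of vertices whose variable lies in the minimal prime `𝔭`. Primality applied
to the minor `x_a x_b - x_c x_d` of a cell meeting `W` forces `W` to contain a diagonal and an
anti-diagonal corner of it, i.e. an edge, so `W` is admissible and `I_adj(𝒞) ⊆ P_W(𝒞)`. The
binomials of `Λ_{𝒞_W}` lie in `𝔭`, by induction along the lattice: `𝔭` is prime and contains no
variable occurring in them. Finally `P_W(𝒞)` is prime, being the kernel of the monomial map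
`x_v ↦ [e_v]` (and `x_w ↦ 0` for `w ∈ W`) into the group algebra of `ℤ^{V(𝒞)} ⧸ Λ_{𝒞_W}`: this
quotient is torsion-free because the cell vectors are unitriangular with respect to their top right
corners. Minimality of `𝔭` then gives `𝔭 = P_W(𝒞)`.
-/

theorem AddSubmonoid.NSMulSaturated.isAddTorsionFree_quotient {G : Type*} [AddCommGroup G]
    {H : AddSubgroup G} (hH : H.NSMulSaturated) : IsAddTorsionFree (G ⧸ H) where
  nsmul_right_injective n hn a b hab := by
    induction a using QuotientAddGroup.induction_on
    induction b using QuotientAddGroup.induction_on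
    simp only [← QuotientAddGroup.mk_nsmul, QuotientAddGroup.eq] at hab ⊢
    exact (hH (by rwa [smul_add, smul_neg])).resolve_left hn

theorem AddSubgroup.apply_eq_zero_of_mem_closure {ι M : Type*} [AddGroup M] {S : Set (ι → M)}
    {i : ι} (hS : ∀ s ∈ S, s i = 0) {e : ι → M} (he : e ∈ AddSubgroup.closure S) : e i = 0 :=
  (AddSubgroup.closure_le (AddMonoidHom.ker (Pi.evalAddMonoidHom (fun _ => M) i))).mpr hS he

theorem Module.Basis.ker_le_of_map_basis {R M N ι κ : Type*} [CommRing R] [AddCommGroup M]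
    [Module R M] [AddCommGroup N] [Module R N] (b : Module.Basis ι R M)
    (c : Module.Basis κ R N) (φ : M →ₗ[R] N) (Z : Set ι) (g : ι → κ) (J : Submodule R M)
    (hZ : ∀ i ∈ Z, φ (b i) = 0 ∧ b i ∈ J) (hg : ∀ i ∉ Z, φ (b i) = c (g i))
    (hJ : ∀ i ∉ Z, ∀ j ∉ Z, g i = g j → b i - b j ∈ J) : LinearMap.ker φ ≤ J := by
  classical
  -- a left inverse of `φ` modulo `J`, sending `c k` to a chosen preimage
  let ρ : N →ₗ[R] M ⧸ J :=
    c.constr R fun k => if h : ∃ i ∉ Z, g i = k then J.mkQ (b h.choose) else 0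
  have hρ : ρ ∘ₗ φ = J.mkQ := b.ext fun i => by
    by_cases hi : i ∈ Z
    · simp [hZ i hi, (Submodule.Quotient.mk_eq_zero J).mpr (hZ i hi).2]
    · have h : ∃ j ∉ Z, g j = g i := ⟨i, hi, rfl⟩
      simp only [LinearMap.comp_apply, hg i hi, ρ, Module.Basis.constr_basis, dif_pos h,
        Submodule.mkQ_apply, Submodule.Quotient.eq]
      exact hJ _ h.choose_spec.1 _ hi h.choose_spec.2
  intro f hf
  have := LinearMap.congr_fun hρ f
  rw [LinearMap.comp_apply, LinearMap.mem_ker.mp hf, map_zero, Submodule.mkQ_apply,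
    eq_comm, Submodule.Quotient.mk_eq_zero] at this
  exact this

theorem Ideal.IsPrime.mem_or_mem_and_mem_or_mem {R : Type*} [CommRing R] {p : Ideal R}
    [hp : p.IsPrime] {a b c d : R} (h : a * b - c * d ∈ p)
    (hmem : a ∈ p ∨ b ∈ p ∨ c ∈ p ∨ d ∈ p) : (a ∈ p ∨ b ∈ p) ∧ (c ∈ p ∨ d ∈ p) := by
  have hiff : a * b ∈ p ↔ c * d ∈ p :=
    ⟨fun hab => by simpa using p.sub_mem hab h, fun hcd => by simpa using p.add_mem h hcd⟩
  rw [hp.mul_mem_iff_mem_or_mem, hp.mul_mem_iff_mem_or_mem] at hiff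
  tauto

theorem Ideal.mul_sub_mul_mem_of_or {R : Type*} [CommRing R] {I : Ideal R} {a b c d : R}
    (hab : a ∈ I ∨ b ∈ I) (hcd : c ∈ I ∨ d ∈ I) : a * b - c * d ∈ I := by
  refine I.sub_mem ?_ ?_
  · rcases hab with h | h
    exacts [I.mul_mem_right _ h, I.mul_mem_left _ h]
  · rcases hcd with h | h
    exacts [I.mul_mem_right _ h, I.mul_mem_left _ h]

noncomputable section

namespace MvPolynomial

variable {σ : Type*} {K : Type*} [CommRing K]

theorem exists_X_mem_of_monomial_mem {p : Ideal (MvPolynomial σ K)} [p.IsPrime] {u : σ →₀ ℕ}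
    (hu : monomial u (1 : K) ∈ p) : ∃ w, u w ≠ 0 ∧ X w ∈ p := by
  rw [monomial_eq, C_1, one_mul, Finsupp.prod] at hu
  obtain ⟨w, hw, hwp⟩ := Ideal.IsPrime.prod_mem_iff.mp hu
  exact ⟨w, Finsupp.mem_support_iff.mp hw, Ideal.IsPrime.mem_of_pow_mem ‹_› _ hwp⟩

open scoped Classical in
variable (K) in
def monomialMap (Z : Set σ) (Λ : AddSubgroup (σ → ℤ)) :
    MvPolynomial σ K →ₐ[K] AddMonoidAlgebra K ((σ → ℤ) ⧸ Λ) :=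
  aeval fun v =>
    if v ∈ Z then 0 else AddMonoidAlgebra.single ((Pi.single v 1 : σ → ℤ) : (σ → ℤ) ⧸ Λ) 1

theorem monomialMap_monomial_of_exists {Z : Set σ} {Λ : AddSubgroup (σ → ℤ)} {u : σ →₀ ℕ}
    (hu : ∃ v ∈ Z, u v ≠ 0) : monomialMap K Z Λ (monomial u 1) = 0 := by
  obtain ⟨v, hvZ, hv⟩ := hu
  rw [monomialMap, aeval_monomial, map_one, one_mul, Finsupp.prod]
  exact Finset.prod_eq_zero (Finsupp.mem_support_iff.mpr hv) (by simp [hvZ, hv])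

variable [Fintype σ]

/-- The exponent `e⁺` of `x^{e⁺} - x^{e⁻}`; the exponent `e⁻` is `posExp (-e)`. -/
def posExp (e : σ → ℤ) : σ →₀ ℕ :=
  Finsupp.equivFunOnFinite.symm fun w => (e w).toNat

@[simp]
theorem posExp_apply (e : σ → ℤ) (w : σ) : posExp e w = (e w).toNat :=
  rfl

variable (K) in
def latticeBinomial (e : σ → ℤ) : MvPolynomial σ K :=
  (∏ w, X w ^ (e w).toNat) - ∏ w, X w ^ (-(e w)).toNat

variable (K) in
/-- `latticeIdeal K C D` is `latticeIdealOf K (cellLattice C D)` by definition. -/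
def latticeIdealOf (Λ : AddSubgroup (σ → ℤ)) : Ideal (MvPolynomial σ K) :=
  Ideal.span {f | ∃ e ∈ Λ, f = latticeBinomial K e}

theorem prod_X_pow_toNat (e : σ → ℤ) :
    ∏ w, (X w : MvPolynomial σ K) ^ (e w).toNat = monomial (posExp e) 1 := by
  rw [monomial_eq, C_1, one_mul, Finsupp.prod_fintype _ _ fun _ => pow_zero _]
  rfl

theorem latticeBinomial_eq (e : σ → ℤ) :
    latticeBinomial K e = monomial (posExp e) 1 - monomial (posExp (-e)) 1 := by
  rw [latticeBinomial, prod_X_pow_toNat, ← prod_X_pow_toNat (-e)]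
  rfl

theorem latticeBinomial_neg (e : σ → ℤ) : latticeBinomial K (-e) = -latticeBinomial K e := by
  rw [latticeBinomial_eq, latticeBinomial_eq, neg_neg, neg_sub]

theorem latticeBinomial_mem_latticeIdealOf {Λ : AddSubgroup (σ → ℤ)} {e : σ → ℤ} (he : e ∈ Λ) :
    latticeBinomial K e ∈ latticeIdealOf K Λ :=
  Ideal.subset_span ⟨e, he, rfl⟩

theorem monomial_mul_latticeBinomial_add (e f : σ → ℤ) :
    monomial (posExp e + posExp f - posExp (e + f)) 1 * latticeBinomial K (e + f) =
      monomial (posExp f) 1 * latticeBinomial K e +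
        monomial (posExp (-e)) 1 * latticeBinomial K f := by
  have h₁ : posExp e + posExp f - posExp (e + f) + posExp (e + f) = posExp f + posExp e := by
    ext w
    simp only [Finsupp.add_apply, Finsupp.tsub_apply, posExp_apply, Pi.add_apply]
    omega
  have h₂ : posExp e + posExp f - posExp (e + f) + posExp (-(e + f)) =
      posExp (-e) + posExp (-f) := by
    ext w
    simp only [Finsupp.add_apply, Finsupp.tsub_apply, posExp_apply, Pi.add_apply, Pi.neg_apply]
    omega
  simp only [latticeBinomial_eq, mul_sub, monomial_mul, mul_one, h₁, h₂]
  rw [add_comm (posExp (-e)) (posExp f)]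
  ring

theorem monomial_sub_monomial_eq_mul_latticeBinomial (u u' : σ →₀ ℕ) :
    monomial u (1 : K) - monomial u' 1 =
      monomial (u ⊓ u') 1 * latticeBinomial K (fun w => (u w : ℤ) - u' w) := by
  have h₁ : u ⊓ u' + posExp (fun w => (u w : ℤ) - u' w) = u := by
    ext w
    simp only [Finsupp.add_apply, Finsupp.inf_apply, posExp_apply]
    omega
  have h₂ : u ⊓ u' + posExp (-fun w => (u w : ℤ) - u' w) = u' := by
    ext w
    simp only [Finsupp.add_apply, Finsupp.inf_apply, posExp_apply, Pi.neg_apply]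
    omega
  rw [latticeBinomial_eq, mul_sub, monomial_mul, monomial_mul, mul_one, h₁, h₂]

theorem latticeBinomial_mem_of_mem_closure {p : Ideal (MvPolynomial σ K)} [hp : p.IsPrime]
    {S : Set (σ → ℤ)} (hS : ∀ s ∈ S, latticeBinomial K s ∈ p)
    (hSX : ∀ s ∈ S, ∀ w, X w ∈ p → s w = 0) {e : σ → ℤ} (he : e ∈ AddSubgroup.closure S) :
    latticeBinomial K e ∈ p := by
  have hvanish : ∀ {e}, e ∈ AddSubgroup.closure S → ∀ w, X w ∈ p → e w = 0 :=
    fun he w hw => AddSubgroup.apply_eq_zero_of_mem_closure (fun s hs => hSX s hs w hw) he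
  induction he using AddSubgroup.closure_induction with
  | mem s hs => exact hS s hs
  | zero => simp [latticeBinomial]
  | add e f he hf ihe ihf =>
    have hmul := monomial_mul_latticeBinomial_add (K := K) e f ▸
      p.add_mem (p.mul_mem_left _ ihe) (p.mul_mem_left _ ihf)
    -- the monomial factor only involves variables occurring in `e` or `f`, none of which is in `p`
    refine (hp.mem_or_mem hmul).resolve_left fun hc => ?_
    obtain ⟨w, hw, hwp⟩ := exists_X_mem_of_monomial_mem hc
    have := hvanish he w hwp
    have := hvanish hf w hwp
    simp_all
  | neg e he ihe => simpa [latticeBinomial_neg] using ihe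

theorem monomialMap_monomial_of_forall {Z : Set σ} {Λ : AddSubgroup (σ → ℤ)} {u : σ →₀ ℕ}
    (hu : ∀ v ∈ Z, u v = 0) :
    monomialMap K Z Λ (monomial u 1) =
      AddMonoidAlgebra.single (((fun v => (u v : ℤ)) : σ → ℤ) : (σ → ℤ) ⧸ Λ) 1 := by
  classical
  have hfactor : ∀ v, (if v ∈ Z then 0 else
      AddMonoidAlgebra.single ((Pi.single v 1 : σ → ℤ) : (σ → ℤ) ⧸ Λ) (1 : K)) ^ u v =
      AddMonoidAlgebra.single (((Pi.single v (u v : ℤ)) : σ → ℤ) : (σ → ℤ) ⧸ Λ) 1 := by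
    intro v
    by_cases hv : v ∈ Z
    · simp [hv, hu v hv, AddMonoidAlgebra.one_def]
    · rw [if_neg hv, AddMonoidAlgebra.single_pow, one_pow, ← QuotientAddGroup.mk_nsmul,
        ← Pi.single_smul', nsmul_eq_mul, mul_one]
  rw [monomialMap, aeval_monomial, map_one, one_mul, Finsupp.prod_fintype _ _ fun _ => pow_zero _]
  simp only [hfactor, AddMonoidAlgebra.prod_single, Finset.prod_const_one]
  rw [← QuotientAddGroup.mk_sum, Finset.univ_sum_single]

/-- The ideal is the kernel of `monomialMap K Z Λ`, whose target is a domain since `ℤ^σ ⧸ Λ` is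
torsion-free. -/
theorem isPrime_span_X_image_sup_latticeIdealOf [IsDomain K] (Z : Set σ)
    {Λ : AddSubgroup (σ → ℤ)} (hΛ : Λ.NSMulSaturated) (hZ : ∀ e ∈ Λ, ∀ v ∈ Z, e v = 0) :
    (Ideal.span (X '' Z) ⊔ latticeIdealOf K Λ).IsPrime := by
  have := hΛ.isAddTorsionFree_quotient
  set J := Ideal.span (X '' Z) ⊔ latticeIdealOf K Λ
  suffices h : J = RingHom.ker (monomialMap K Z Λ) from h ▸ RingHom.ker_isPrime _
  refine le_antisymm (sup_le ?_ ?_) fun f hf => ?_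
  · rw [Ideal.span_le]
    rintro _ ⟨v, hv, rfl⟩
    simp [monomialMap, hv]
  · rw [latticeIdealOf, Ideal.span_le]
    rintro _ ⟨e, he, rfl⟩
    have hpos : ∀ v ∈ Z, posExp e v = 0 := fun v hv => by simp [hZ e he v hv]
    have hneg : ∀ v ∈ Z, posExp (-e) v = 0 := fun v hv => by simp [hZ e he v hv]
    rw [SetLike.mem_coe, RingHom.mem_ker, latticeBinomial_eq, map_sub,
      monomialMap_monomial_of_forall hpos, monomialMap_monomial_of_forall hneg, sub_eq_zero,
      QuotientAddGroup.eq.mpr]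
    convert neg_mem he using 1
    ext w
    simp only [Pi.add_apply, Pi.neg_apply, posExp_apply]
    omega
  · refine (basisMonomials σ K).ker_le_of_map_basis (AddMonoidAlgebra.basis _ K)
      (monomialMap K Z Λ).toLinearMap {u | ∃ v ∈ Z, u v ≠ 0}
      (fun u => (((fun v => (u v : ℤ)) : σ → ℤ) : (σ → ℤ) ⧸ Λ)) (J.restrictScalars K)
      (fun u hu => ⟨monomialMap_monomial_of_exists hu, Ideal.mem_sup_left ?_⟩)
      (fun u hu => monomialMap_monomial_of_forall (by simpa using hu))
      (fun u hu u' hu' huu' => ?_) hf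
    · exact mem_ideal_span_X_image.mpr fun m hm => by
        rwa [Finset.mem_singleton.mp (support_monomial_subset hm)]
    · rw [coe_basisMonomials, Submodule.restrictScalars_mem,
        monomial_sub_monomial_eq_mul_latticeBinomial]
      refine J.mul_mem_left _ (Ideal.mem_sup_right (latticeBinomial_mem_latticeIdealOf ?_))
      convert neg_mem (QuotientAddGroup.eq.mp huu') using 1
      ext w
      simp only [Pi.neg_apply, Pi.add_apply]
      ring

end MvPolynomial

end

theorem exists_mem_cellEdges_iff {a : ℤ × ℤ} {W : Set (ℤ × ℤ)} :
    (∃ e ∈ cellEdges a, e.1 ∈ W ∧ e.2 ∈ W) ↔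
      (a ∈ W ∨ a + (1, 1) ∈ W) ∧ (a + (0, 1) ∈ W ∨ a + (1, 0) ∈ W) := by
  simp only [cellEdges, Finset.mem_insert, Finset.mem_singleton, exists_eq_or_imp, exists_eq_left]
  tauto

section CellLattice

variable {C : Finset (ℤ × ℤ)}

theorem cellVec_apply_of_notMem {a : ℤ × ℤ} {w : {v // v ∈ verts C}} (hw : w.1 ∉ cellVerts a) :
    cellVec C a w = 0 := by
  simp only [cellVerts, Finset.mem_insert, Finset.mem_singleton, not_or] at hw
  simp [cellVec, hw]

theorem posExp_cellVec {a : ℤ × ℤ} (ha : a ∈ C) :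
    posExp (cellVec C a) = Finsupp.single ⟨a, mem_verts ha (corner_mem00 a)⟩ 1 +
      Finsupp.single ⟨a + (1, 1), mem_verts ha (corner_mem11 a)⟩ 1 := by
  ext ⟨w, hw⟩
  simp only [posExp_apply, cellVec, Finsupp.add_apply, Finsupp.single_apply, Subtype.mk.injEq]
  split_ifs <;> simp only [Prod.ext_iff, Prod.fst_add, Prod.snd_add] at * <;> omega

theorem posExp_neg_cellVec {a : ℤ × ℤ} (ha : a ∈ C) :
    posExp (-cellVec C a) = Finsupp.single ⟨a + (0, 1), mem_verts ha (corner_mem01 a)⟩ 1 +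
      Finsupp.single ⟨a + (1, 0), mem_verts ha (corner_mem10 a)⟩ 1 := by
  ext ⟨w, hw⟩
  simp only [posExp_apply, Pi.neg_apply, cellVec, Finsupp.add_apply, Finsupp.single_apply,
    Subtype.mk.injEq]
  split_ifs <;> simp only [Prod.ext_iff, Prod.fst_add, Prod.snd_add] at * <;> omega

theorem latticeBinomial_cellVec (K : Type*) [CommRing K] {a : ℤ × ℤ} (ha : a ∈ C) :
    latticeBinomial K (cellVec C a) =
      X ⟨a, mem_verts ha (corner_mem00 a)⟩ * X ⟨a + (1, 1), mem_verts ha (corner_mem11 a)⟩ -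
        X ⟨a + (0, 1), mem_verts ha (corner_mem01 a)⟩ *
          X ⟨a + (1, 0), mem_verts ha (corner_mem10 a)⟩ := by
  rw [latticeBinomial_eq, posExp_cellVec ha, posExp_neg_cellVec ha, X, X, X, X, monomial_mul,
    monomial_mul, mul_one]

theorem linearCombination_cellVec_apply (l : (ℤ × ℤ) →₀ ℤ) (w : {v // v ∈ verts C}) :
    Finsupp.linearCombination ℤ (cellVec C) l w =
      l w.1 + l (w.1 - (1, 1)) - l (w.1 - (0, 1)) - l (w.1 - (1, 0)) := by
  have hcell : ∀ a, cellVec C a w =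
      (if w.1 = a then 1 else 0) + (if w.1 - (1, 1) = a then 1 else 0) -
        (if w.1 - (0, 1) = a then 1 else 0) - (if w.1 - (1, 0) = a then 1 else 0) := by
    simp only [cellVec, sub_eq_iff_eq_add, implies_true]
  have heval := map_finsuppSum (Pi.evalAddMonoidHom (fun _ => ℤ) w) l fun a c => c • cellVec C a
  simp only [Pi.evalAddMonoidHom_apply] at heval
  rw [Finsupp.linearCombination_apply, heval]
  simp only [Pi.smul_apply, smul_eq_mul, hcell, mul_add, mul_sub, mul_ite, mul_one, mul_zero]
  rw [Finsupp.sum_sub, Finsupp.sum_sub, Finsupp.sum_add]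
  simp only [Finsupp.sum_ite_self_eq]

/-- Downward induction on `a.1 + a.2`: the coordinate at the top right corner of the cell `a`
is `l a` plus the coefficients of three cells lying further up. -/
theorem dvd_of_dvd_linearCombination_cellVec {l : (ℤ × ℤ) →₀ ℤ} (hl : l.support ⊆ C) {n : ℤ}
    (hn : ∀ w, n ∣ Finsupp.linearCombination ℤ (cellVec C) l w) (a : ℤ × ℤ) : n ∣ l a := by
  obtain ⟨M, hM⟩ := (l.support.image fun a => a.1 + a.2).exists_le
  have hsupp : ∀ a, M < a.1 + a.2 → l a = 0 := fun a ha =>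
    Finsupp.notMem_support_iff.mp fun hs => (hM _ (Finset.mem_image_of_mem _ hs)).not_gt ha
  suffices h : ∀ k : ℕ, ∀ a : ℤ × ℤ, M < a.1 + a.2 + k → n ∣ l a from
    h (M + 1 - (a.1 + a.2)).toNat a (by omega)
  intro k
  induction k with
  | zero => exact fun a ha => by simp [hsupp a (by simpa using ha)]
  | succ k ih =>
    intro a ha
    by_cases hs : a ∈ l.support
    · have hb := hn ⟨a + (1, 1), mem_verts (hl hs) (corner_mem11 a)⟩
      have e₁ : a + (1, 1) - (0, 1) = a + (1, 0) := by ext <;> simp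
      have e₂ : a + (1, 1) - (1, 0) = a + (0, 1) := by ext <;> simp
      rw [linearCombination_cellVec_apply, add_sub_cancel_right, e₁, e₂] at hb
      have h₁ := ih (a + (1, 1)) (by simp only [Prod.fst_add, Prod.snd_add]; omega)
      have h₂ := ih (a + (1, 0)) (by simp only [Prod.fst_add, Prod.snd_add]; omega)
      have h₃ := ih (a + (0, 1)) (by simp only [Prod.fst_add, Prod.snd_add]; omega)
      have key : l a = (l (a + (1, 1)) + l a - l (a + (1, 0)) - l (a + (0, 1))) -
          l (a + (1, 1)) + l (a + (1, 0)) + l (a + (0, 1)) := by ring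
      rw [key]
      exact ((hb.sub h₁).add h₂).add h₃
    · rw [Finsupp.notMem_support_iff.mp hs]
      exact dvd_zero n

theorem cellLattice_nsmulSaturated {D : Set (ℤ × ℤ)} (hD : D ⊆ C) :
    (cellLattice C D).NSMulSaturated := by
  intro n x hx
  refine or_iff_not_imp_left.mpr fun hn => ?_
  have hspan : cellLattice C D = (Submodule.span ℤ (cellVec C '' D)).toAddSubgroup := by
    rw [Submodule.span_int_eq_addSubgroupClosure, cellLattice]
    congr 1
    ext g
    simp [eq_comm]
  rw [AddSubgroup.mem_toAddSubmonoid, hspan, Submodule.mem_toAddSubgroup,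
    Finsupp.mem_span_image_iff_linearCombination] at hx ⊢
  obtain ⟨l, hlD, hl⟩ := hx
  have hlD' : ↑l.support ⊆ D := (Finsupp.mem_supported _ _).mp hlD
  have hdvd : ∀ a, (n : ℤ) ∣ l a := dvd_of_dvd_linearCombination_cellVec
    (Finset.coe_subset.mp (hlD'.trans hD)) fun w => by simp [hl]
  refine ⟨l.mapRange (· / (n : ℤ)) (Int.zero_ediv _), (Finsupp.mem_supported _ _).mpr
    ((Finset.coe_subset.mpr Finsupp.support_mapRange).trans hlD'), ?_⟩
  refine IsAddTorsionFree.nsmul_right_injective hn ?_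
  simp only [← map_nsmul, ← hl]
  congr 1
  ext a
  simp [Int.mul_ediv_cancel' (hdvd a)]

end CellLattice

section MinimalPrimes

variable {K : Type*} [Field K] {C : Finset (ℤ × ℤ)}

theorem PW_eq (W : Set (ℤ × ℤ)) :
    PW K C W = Ideal.span (X '' {v : {v // v ∈ verts C} | v.1 ∈ W}) ⊔
      latticeIdealOf K (cellLattice C (subcollW C W)) := by
  rw [PW, Submodule.add_eq_sup]
  congr
  ext
  simp [eq_comm]

theorem isPrime_PW (W : Set (ℤ × ℤ)) : (PW K C W).IsPrime := by
  rw [PW_eq]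
  refine isPrime_span_X_image_sup_latticeIdealOf _ (cellLattice_nsmulSaturated fun a ha => ha.1)
    fun e he v hv => AddSubgroup.apply_eq_zero_of_mem_closure ?_ he
  rintro _ ⟨a, ha, rfl⟩
  exact cellVec_apply_of_notMem fun hva => ha.2 _ hva hv

theorem adjIdeal_le_PW {W : Set (ℤ × ℤ)} (hW : Admissible C W) : adjIdeal K C ≤ PW K C W := by
  rw [adjIdeal, Ideal.span_le]
  rintro _ ⟨a, ha, rfl⟩
  rw [PW_eq]
  rcases hW.2 a ha with hcell | hedge
  · rw [← latticeBinomial_cellVec K ha]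
    exact Ideal.mem_sup_right
      (latticeBinomial_mem_latticeIdealOf (AddSubgroup.subset_closure ⟨a, ⟨ha, hcell⟩, rfl⟩))
  · have hX : ∀ {v} (hv : v ∈ verts C), v ∈ W →
        (X ⟨v, hv⟩ : MvPolynomial _ K) ∈ Ideal.span (X '' {v : {v // v ∈ verts C} | v.1 ∈ W}) :=
      fun _ h => Ideal.subset_span ⟨_, h, rfl⟩
    obtain ⟨hab, hcd⟩ := exists_mem_cellEdges_iff.mp hedge
    exact Ideal.mem_sup_left
      (Ideal.mul_sub_mul_mem_of_or (hab.imp (hX _) (hX _)) (hcd.imp (hX _) (hX _)))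

def vertsVarIn (C : Finset (ℤ × ℤ)) (p : Ideal (MvPolynomial {v // v ∈ verts C} K)) :
    Set (ℤ × ℤ) :=
  {v | ∃ h : v ∈ verts C, X ⟨v, h⟩ ∈ p}

variable {p : Ideal (MvPolynomial {v // v ∈ verts C} K)} [p.IsPrime]

theorem admissible_vertsVarIn (hp : adjIdeal K C ≤ p) : Admissible C (vertsVarIn C p) := by
  refine ⟨fun v hv => hv.1, fun a ha => ?_⟩
  rw [exists_mem_cellEdges_iff]
  by_cases hcell : ∀ v ∈ cellVerts a, v ∉ vertsVarIn C p
  · exact Or.inl hcell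
  right
  have hW : ∀ {v} (hv : v ∈ cellVerts a), v ∈ vertsVarIn C p ↔ X ⟨v, mem_verts ha hv⟩ ∈ p :=
    fun _ => ⟨fun ⟨_, h⟩ => h, fun h => ⟨_, h⟩⟩
  rw [hW (corner_mem00 a), hW (corner_mem11 a), hW (corner_mem01 a), hW (corner_mem10 a)]
  refine Ideal.IsPrime.mem_or_mem_and_mem_or_mem (hp (Ideal.subset_span ⟨a, ha, rfl⟩)) ?_
  simp only [not_forall, not_not] at hcell
  obtain ⟨v, hv, hvW⟩ := hcell
  simp only [cellVerts, Finset.mem_insert, Finset.mem_singleton] at hv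
  rcases hv with rfl | rfl | rfl | rfl
  · exact Or.inl ((hW (corner_mem00 _)).mp hvW)
  · exact Or.inr (Or.inr (Or.inr ((hW (corner_mem10 _)).mp hvW)))
  · exact Or.inr (Or.inr (Or.inl ((hW (corner_mem01 _)).mp hvW)))
  · exact Or.inr (Or.inl ((hW (corner_mem11 _)).mp hvW))

theorem PW_vertsVarIn_le (hp : adjIdeal K C ≤ p) : PW K C (vertsVarIn C p) ≤ p := by
  rw [PW_eq]
  refine sup_le (Ideal.span_le.mpr ?_) (Ideal.span_le.mpr ?_)
  · rintro _ ⟨v, ⟨_, hv⟩, rfl⟩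
    exact hv
  · rintro _ ⟨e, he, rfl⟩
    refine latticeBinomial_mem_of_mem_closure ?_ ?_ he
    · rintro _ ⟨a, ha, rfl⟩
      rw [latticeBinomial_cellVec K ha.1]
      exact hp (Ideal.subset_span ⟨a, ha.1, rfl⟩)
    · rintro _ ⟨a, ha, rfl⟩ w hw
      exact cellVec_apply_of_notMem fun hwa => ha.2 _ hwa ⟨w.2, hw⟩

end MinimalPrimes

theorem stmt_6_general (K : Type*) [Field K] (C : Finset (ℤ × ℤ))
    (p : Ideal (MvPolynomial {v // v ∈ verts C} K))
    (hp : p ∈ (adjIdeal K C).minimalPrimes) :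
    ∃ W : Set (ℤ × ℤ), Admissible C W ∧ p = PW K C W := by
  have := hp.1.1
  have hW := admissible_vertsVarIn hp.1.2
  have hle := PW_vertsVarIn_le hp.1.2
  exact ⟨vertsVarIn C p, hW, le_antisymm (hp.2 ⟨isPrime_PW _, adjIdeal_le_PW hW⟩ hle) hle⟩

/-- Every minimal prime of `I_adj(𝒞)` is of the form `P_W(𝒞)`
for some admissible set `W` of `𝒞`. -/
theorem stmt_6 (K : Type*) [Field K] (C : Finset (ℤ × ℤ)) (hC : C.Nonempty)
    (p : Ideal (MvPolynomial {v // v ∈ verts C} K))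
    (hp : p ∈ (adjIdeal K C).minimalPrimes) :
    ∃ W : Set (ℤ × ℤ), Admissible C W ∧ p = PW K C W :=
  stmt_6_general K C p hp
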